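/- arXiv:1310.3809 — 3 statements merged into one kernel-verified Lean document; each statement's English description precedes it below -/
import Mathlib

section
/- Let α ∈ (1, 2] and ρ ∈ (1/2, 1]. Define C_ρ = ρ^α / (1 − 2(1−ρ)^α). Then the function ρ ↦ C_ρ on the interval where 2(1−ρ)^α < 1 attains its minimum at ρ̂ = 1 − 2^(−1/(α−1)). -/
/-!
Write `C ρ = ρ^α / (1 - 2(1-ρ)^α)`. The minimiser `ρ₀` is characterised by the stationarity
condition `(1 - ρ₀)^(α-1) = 1/2`, which gives `C ρ₀ = ρ₀^(α-1)`. The inequality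
`ρ₀^(α-1) (1 - 2(1-ρ)^α) ≤ ρ^α` then follows by bounding `x ↦ x^α` from below by its tangent
lines, once at `1 - ρ₀` (for the denominator) and once at `ρ₀` (for the numerator).
-/

open Real Set

lemma rpow_sub_one_mul_self {x : ℝ} (hx : x ≠ 0) (α : ℝ) : x ^ (α - 1) * x = x ^ α := by
  rw [← rpow_add_one hx, sub_add_cancel]

lemma rpow_add_mul_rpow_sub_one_mul_sub_le {α x y : ℝ} (hα : 1 ≤ α) (hx : 0 ≤ x) (hy : 0 < y) :
    y ^ α + α * y ^ (α - 1) * (x - y) ≤ x ^ α := by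
  have bernoulli : 1 + α * (x / y - 1) ≤ (x / y) ^ α := by
    have h := one_add_mul_self_le_rpow_one_add (s := x / y - 1)
      (by linarith [div_nonneg hx hy.le]) hα
    rwa [add_sub_cancel] at h
  rw [div_rpow hx hy.le, le_div_iff₀ (rpow_pos_of_pos hy α)] at bernoulli
  calc y ^ α + α * y ^ (α - 1) * (x - y) = (1 + α * (x / y - 1)) * y ^ α := by
        rw [rpow_sub_one hy.ne']; field_simp
    _ ≤ x ^ α := bernoulli

lemma one_sub_two_mul_one_sub_rpow_eq_self {α ρ : ℝ} (hρ : ρ < 1)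
    (hstat : (1 - ρ) ^ (α - 1) = 1 / 2) : 1 - 2 * (1 - ρ) ^ α = ρ := by
  rw [← rpow_sub_one_mul_self (by linarith), hstat]
  ring

lemma isMinOn_of_one_sub_rpow_eq_half {α ρ₀ : ℝ} (hα : 1 ≤ α) (h₀ : 0 < ρ₀) (h₁ : ρ₀ < 1)
    (hstat : (1 - ρ₀) ^ (α - 1) = 1 / 2) :
    IsMinOn (fun ρ : ℝ => ρ ^ α / (1 - 2 * (1 - ρ) ^ α))
      {ρ : ℝ | ρ ∈ Icc 0 1 ∧ 2 * (1 - ρ) ^ α < 1} ρ₀ := by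
  rintro ρ ⟨⟨hρ0, hρ1⟩, hden⟩
  have tangent_denom : 1 - 2 * (1 - ρ) ^ α ≤ ρ₀ + α * (ρ - ρ₀) := by
    have h := rpow_add_mul_rpow_sub_one_mul_sub_le hα (sub_nonneg.mpr hρ1) (sub_pos.mpr h₁)
    rw [hstat] at h
    linarith [one_sub_two_mul_one_sub_rpow_eq_self h₁ hstat]
  have tangent_num : ρ₀ ^ (α - 1) * (ρ₀ + α * (ρ - ρ₀)) ≤ ρ ^ α := by
    have h := rpow_add_mul_rpow_sub_one_mul_sub_le hα hρ0 h₀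
    rw [← rpow_sub_one_mul_self h₀.ne'] at h
    linear_combination h
  show ρ₀ ^ α / (1 - 2 * (1 - ρ₀) ^ α) ≤ ρ ^ α / (1 - 2 * (1 - ρ) ^ α)
  rw [one_sub_two_mul_one_sub_rpow_eq_self h₁ hstat, ← rpow_sub_one h₀.ne',
    le_div_iff₀ (by linarith)]
  calc ρ₀ ^ (α - 1) * (1 - 2 * (1 - ρ) ^ α) ≤ ρ₀ ^ (α - 1) * (ρ₀ + α * (ρ - ρ₀)) := by
        gcongr
    _ ≤ ρ ^ α := tangent_num

/-- Mulders' optimal parameter: for `α ∈ (1, 2]` and `C ρ = ρ^α / (1 - 2(1-ρ)^α)`,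
the function `ρ ↦ C ρ`, on the part of the interval `(1/2, 1]` where
`2 * (1 - ρ)^α < 1`, attains its minimum at `ρ̂ = 1 - 2^(-1/(α-1))`. -/
theorem mulders_optimal_rho (α : ℝ) (hα : α ∈ Set.Ioc (1 : ℝ) 2) :
    IsMinOn (fun ρ : ℝ => ρ ^ α / (1 - 2 * (1 - ρ) ^ α))
      {ρ : ℝ | ρ ∈ Set.Ioc (1 / 2 : ℝ) 1 ∧ 2 * (1 - ρ) ^ α < 1}
      (1 - 2 ^ (-1 / (α - 1))) := by
  have hβ : 0 < α - 1 := sub_pos.mpr hα.1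
  have hpos : 0 < (2 : ℝ) ^ (-1 / (α - 1)) := rpow_pos_of_pos two_pos _
  have hlt : (2 : ℝ) ^ (-1 / (α - 1)) < 1 :=
    rpow_lt_one_of_one_lt_of_neg one_lt_two (div_neg_of_neg_of_pos neg_one_lt_zero hβ)
  have hstat : (1 - (1 - (2 : ℝ) ^ (-1 / (α - 1)))) ^ (α - 1) = 1 / 2 := by
    rw [sub_sub_cancel, ← rpow_mul zero_le_two, div_mul_cancel₀ _ hβ.ne', rpow_neg_one,
      one_div]
  refine (isMinOn_of_one_sub_rpow_eq_half hα.1.le (by linarith) (by linarith) hstat).on_subset ?_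
  rintro ρ ⟨⟨hρ0, hρ1⟩, hden⟩
  exact ⟨⟨by linarith, hρ1⟩, hden⟩
end

section
/- Let α ∈ (1, 2], ρ ∈ (1/2, 1) with 2(1−ρ)^α < 1, and c > 0. If S : ℕ → ℝ satisfies S(n) ≤ c·(ρn)^α + 2·S(⌈(1−ρ)n⌉) for all n ≥ n₀ and S is bounded on [0, n₀], then there exists a constant C with S(n) ≤ C·n^α for all n; moreover one can take C arbitrarily close to c·ρ^α/(1 − 2(1−ρ)^α) for large n. -/
/-!
Put `q = 2 (1 - ρ)^α < 1` and `K = c ρ^α / (1 - q)`. Every `A > K` satisfies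
`c ρ^α + q A < A`, and since `⌈(1 - ρ) n⌉ / n → 1 - ρ < 1/2`, for large `n` this slack absorbs
the rounding of the subproblem size, while a linear term `E n` survives one step of the
recurrence because `2 ⌈(1 - ρ) n⌉ ≤ n`. Strong induction then gives `S n ≤ A n^α + E n`,
with `E` covering the finitely many small `n`; for `α > 1` the linear term is `o(n^α)`.
-/

open Real Filter Topology

theorem tendsto_natCeil_mul_div_natCast {a : ℝ} (ha : 0 ≤ a) :
    Tendsto (fun n : ℕ ↦ (⌈a * n⌉₊ : ℝ) / n) atTop (𝓝 a) :=
  (tendsto_nat_ceil_mul_div_atTop ha).comp tendsto_natCast_atTop_atTop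

theorem eventually_two_mul_natCeil_mul_le {a : ℝ} (ha₀ : 0 ≤ a) (ha : a < 1 / 2) :
    ∀ᶠ n : ℕ in atTop, 2 * ⌈a * n⌉₊ ≤ n := by
  filter_upwards [(tendsto_natCeil_mul_div_natCast ha₀).eventually_lt_const ha,
    eventually_ge_atTop 1] with n hlt hn
  have hn' : (0 : ℝ) < n := by exact_mod_cast hn
  rw [div_lt_iff₀ hn'] at hlt
  exact_mod_cast (by linarith : (2 * ⌈a * n⌉₊ : ℝ) ≤ n)

theorem eventually_mul_rpow_add_two_mul_natCeil_rpow_le {a b A α : ℝ} (ha : 0 < a)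
    (hAb : b + 2 * A * a ^ α < A) :
    ∀ᶠ n : ℕ in atTop, b * (n : ℝ) ^ α + 2 * A * (⌈a * n⌉₊ : ℝ) ^ α ≤ A * (n : ℝ) ^ α := by
  have hlim : Tendsto (fun n : ℕ ↦ b + 2 * A * ((⌈a * n⌉₊ : ℝ) / n) ^ α) atTop
      (𝓝 (b + 2 * A * a ^ α)) :=
    (((tendsto_natCeil_mul_div_natCast ha.le).rpow_const (.inl ha.ne')).const_mul _).const_add _
  filter_upwards [hlim.eventually_lt_const hAb, eventually_ge_atTop 1] with n hlt hn
  have hn' : (0 : ℝ) < n := by exact_mod_cast hn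
  rw [div_rpow (Nat.cast_nonneg _) hn'.le] at hlt
  have hnα : 0 < (n : ℝ) ^ α := rpow_pos_of_pos hn' α
  calc b * (n : ℝ) ^ α + 2 * A * (⌈a * n⌉₊ : ℝ) ^ α
      = (b + 2 * A * ((⌈a * n⌉₊ : ℝ) ^ α / (n : ℝ) ^ α)) * (n : ℝ) ^ α := by
        field_simp
    _ ≤ A * (n : ℝ) ^ α := by gcongr

theorem eventually_mul_le_mul_rpow {α δ : ℝ} (hα : 1 < α) (hδ : 0 < δ) (E : ℝ) :
    ∀ᶠ n : ℕ in atTop, E * n ≤ δ * (n : ℝ) ^ α := by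
  filter_upwards [((tendsto_rpow_atTop (sub_pos.2 hα)).comp
    tendsto_natCast_atTop_atTop).eventually_ge_atTop (E / δ), eventually_ge_atTop 1] with n hE hn
  have hn' : (0 : ℝ) < n := by exact_mod_cast hn
  rw [Function.comp_apply, div_le_iff₀ hδ] at hE
  calc E * n ≤ (n : ℝ) ^ (α - 1) * δ * n := by gcongr
    _ = δ * (n : ℝ) ^ α := by
      rw [mul_comm _ δ, mul_assoc, ← rpow_add_one hn'.ne', sub_add_cancel]

theorem exists_le_rpow_add_linear_of_recurrence {α ρ c A : ℝ} (hρ : ρ ∈ Set.Ioo (1 / 2 : ℝ) 1)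
    {S : ℕ → ℝ} {n₀ : ℕ}
    (hrec : ∀ n : ℕ, n₀ ≤ n → S n ≤ c * (ρ * n) ^ α + 2 * S ⌈(1 - ρ) * n⌉₊)
    (hA : 0 ≤ A) (hAc : c * ρ ^ α + 2 * A * (1 - ρ) ^ α < A) :
    ∃ E : ℝ, 0 ≤ E ∧ ∀ n : ℕ, 1 ≤ n → S n ≤ A * (n : ℝ) ^ α + E * n := by
  obtain ⟨hρ₁, hρ₂⟩ := hρ
  obtain ⟨N, hN⟩ := eventually_atTop.1 <| (eventually_ge_atTop n₀).and <|
    (eventually_two_mul_natCeil_mul_le (a := 1 - ρ) (by linarith) (by linarith)).and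
    (eventually_mul_rpow_add_two_mul_natCeil_rpow_le (by linarith) hAc)
  set E := ∑ k ∈ Finset.range N, |S k|
  have hE : 0 ≤ E := Finset.sum_nonneg fun k _ ↦ abs_nonneg _
  refine ⟨E, hE, fun n ↦ ?_⟩
  induction n using Nat.strong_induction_on with
  | _ n ih =>
    intro hn
    have hn' : (1 : ℝ) ≤ n := by exact_mod_cast hn
    have hAn : 0 ≤ A * (n : ℝ) ^ α := by positivity
    rcases lt_or_ge n N with hnN | hNn
    · calc S n ≤ E := (le_abs_self _).trans <|
            Finset.single_le_sum (fun k _ ↦ abs_nonneg (S k)) (Finset.mem_range.2 hnN)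
        _ ≤ A * (n : ℝ) ^ α + E * n := by nlinarith
    · obtain ⟨hn₀, hm, hstep⟩ := hN n hNn
      set m := ⌈(1 - ρ) * n⌉₊
      have hm₁ : 1 ≤ m := Nat.one_le_ceil_iff.2 (by nlinarith)
      have hIH := ih m (by omega) hm₁
      have hm' : 2 * (m : ℝ) ≤ n := by exact_mod_cast hm
      calc S n ≤ c * (ρ * n) ^ α + 2 * S m := hrec n hn₀
        _ = c * ρ ^ α * (n : ℝ) ^ α + 2 * S m := by
          rw [mul_rpow (by linarith) (Nat.cast_nonneg _), mul_assoc]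
        _ ≤ c * ρ ^ α * (n : ℝ) ^ α + 2 * A * (m : ℝ) ^ α + E * (2 * m) := by linarith
        _ ≤ A * (n : ℝ) ^ α + E * n := by
          linarith [hstep, mul_le_mul_of_nonneg_left hm' hE]

theorem short_product_recurrence_general
    (α ρ c : ℝ) (hα : α ∈ Set.Ioc (1 : ℝ) 2) (hρ : ρ ∈ Set.Ioo (1 / 2 : ℝ) 1)
    (hρα : 2 * (1 - ρ) ^ α < 1) (hc : 0 < c)
    (S : ℕ → ℝ) (n₀ : ℕ)
    (hrec : ∀ n : ℕ, n₀ ≤ n → S n ≤ c * (ρ * n) ^ α + 2 * S ⌈(1 - ρ) * n⌉₊) :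
    (∃ C : ℝ, ∀ n : ℕ, 1 ≤ n → S n ≤ C * (n : ℝ) ^ α) ∧
    (∀ ε : ℝ, 0 < ε → ∃ N : ℕ, ∀ n : ℕ, N ≤ n →
      S n ≤ (c * ρ ^ α / (1 - 2 * (1 - ρ) ^ α) + ε) * (n : ℝ) ^ α) := by
  set K := c * ρ ^ α / (1 - 2 * (1 - ρ) ^ α)
  have hK : 0 < K := div_pos (mul_pos hc (rpow_pos_of_pos (by linarith [hρ.1]) α)) (by linarith)
  have hslack : ∀ A, K < A → c * ρ ^ α + 2 * A * (1 - ρ) ^ α < A := fun A hA ↦ by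
    rw [div_lt_iff₀ (by linarith)] at hA
    linarith
  have key := fun A hA ↦
    exists_le_rpow_add_linear_of_recurrence hρ hrec (by linarith) (hslack A hA)
  constructor
  · obtain ⟨E, hE, hS⟩ := key (K + 1) (by linarith)
    refine ⟨K + 1 + E, fun n hn ↦ ?_⟩
    have hlin : E * n ≤ E * (n : ℝ) ^ α :=
      mul_le_mul_of_nonneg_left (self_le_rpow_of_one_le (by exact_mod_cast hn) hα.1.le) hE
    linarith [hS n hn]
  · intro ε hε
    obtain ⟨E, -, hS⟩ := key (K + ε / 2) (by linarith)
    obtain ⟨N, hN⟩ := eventually_atTop.1 <|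
      (eventually_ge_atTop 1).and (eventually_mul_le_mul_rpow hα.1 (half_pos hε) E)
    refine ⟨N, fun n hn ↦ ?_⟩
    obtain ⟨hn₁, hlin⟩ := hN n hn
    linarith [hS n hn₁]

/-- Recurrence analysis of the short-product algorithm: if
`S n ≤ c * (ρ * n)^α + 2 * S ⌈(1 - ρ) * n⌉` for all `n ≥ n₀` and `S` is bounded on
`[0, n₀]`, then `S n ≤ C * n^α` for some constant `C` and all `n ≥ 1`; moreover, for
every `ε > 0` one eventually has `S n ≤ (c * ρ^α / (1 - 2 * (1-ρ)^α) + ε) * n^α`. -/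
theorem short_product_recurrence
    (α ρ c : ℝ) (hα : α ∈ Set.Ioc (1 : ℝ) 2) (hρ : ρ ∈ Set.Ioo (1 / 2 : ℝ) 1)
    (hρα : 2 * (1 - ρ) ^ α < 1) (hc : 0 < c)
    (S : ℕ → ℝ) (n₀ : ℕ)
    (hrec : ∀ n : ℕ, n₀ ≤ n → S n ≤ c * (ρ * n) ^ α + 2 * S ⌈(1 - ρ) * n⌉₊)
    (hbdd : ∃ B : ℝ, ∀ n : ℕ, n ≤ n₀ → |S n| ≤ B) :
    (∃ C : ℝ, ∀ n : ℕ, 1 ≤ n → S n ≤ C * (n : ℝ) ^ α) ∧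
    (∀ ε : ℝ, 0 < ε → ∃ N : ℕ, ∀ n : ℕ, N ≤ n →
      S n ≤ (c * ρ ^ α / (1 - 2 * (1 - ρ) ^ α) + ε) * (n : ℝ) ^ α) :=
  short_product_recurrence_general α ρ c hα hρ hρα hc S n₀ hrec
end

section
/- Let m be odd, R = 2^(2⌈n/2⌉), and m' satisfy m·m' ≡ −1 (mod R). Given input a with 0 ≤ a < m², set b = a·m' mod R. Write m = m₁·2^⌈n/2⌉ + m₀ and b = b₁·2^⌈n/2⌉ + b₀ with 0 ≤ m₀, b₀ < 2^⌈n/2⌉. Then m₀·b₀ ≡ −(a + (m₁b₀ + m₀b₁)·2^⌈n/2⌉) (mod R). -/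
/-! Since `b ≡ a m'` and `m m' ≡ -1 (mod R)`, we have `m b ≡ -a (mod R)`. Expanding
`m b = (m₁ X + m₀)(b₁ X + b₀)` with `X = 2^H` and `R = X²`, the high sub-product `m₁ b₁ X²`
vanishes mod `R`, so the low one is `m b` minus the cross terms, i.e. `-a` minus the cross terms. -/

theorem Int.mul_modEq_neg_of_modEq_mul {N m m' a b : ℤ} (hmm' : m * m' ≡ -1 [ZMOD N])
    (hb : b ≡ a * m' [ZMOD N]) : m * b ≡ -a [ZMOD N] :=
  calc m * b ≡ m * (a * m') [ZMOD N] := hb.mul_left m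
    _ = a * (m * m') := by ring
    _ ≡ a * -1 [ZMOD N] := hmm'.mul_left a
    _ = -a := by ring

theorem Int.mul_modEq_mul_sub_cross_of_split (X m₁ m₀ b₁ b₀ : ℤ) :
    m₀ * b₀ ≡ (m₁ * X + m₀) * (b₁ * X + b₀) - (m₁ * b₀ + m₀ * b₁) * X [ZMOD X ^ 2] :=
  Int.modEq_iff_dvd.mpr ⟨m₁ * b₁, by ring⟩

theorem montgomery_low_subproduct_general
    (m m' a b m₁ m₀ b₁ b₀ : ℤ)
    (H : ℕ)
    (hmm' : m * m' ≡ -1 [ZMOD ((2 : ℤ) ^ (2 * H))])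
    (hb : b = a * m' % ((2 : ℤ) ^ (2 * H)))
    (hm_split : m = m₁ * 2 ^ H + m₀)
    (hb_split : b = b₁ * 2 ^ H + b₀) :
    m₀ * b₀ ≡ -(a + (m₁ * b₀ + m₀ * b₁) * 2 ^ H) [ZMOD ((2 : ℤ) ^ (2 * H))] := by
  have hmb : m * b ≡ -a [ZMOD 2 ^ (2 * H)] :=
    Int.mul_modEq_neg_of_modEq_mul hmm' (hb ▸ Int.mod_modEq _ _)
  have hlow := Int.mul_modEq_mul_sub_cross_of_split (2 ^ H) m₁ m₀ b₁ b₀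
  rw [← hm_split, ← hb_split, ← pow_mul'] at hlow
  calc m₀ * b₀ ≡ m * b - (m₁ * b₀ + m₀ * b₁) * 2 ^ H [ZMOD 2 ^ (2 * H)] := hlow
    _ ≡ -a - (m₁ * b₀ + m₀ * b₁) * 2 ^ H [ZMOD 2 ^ (2 * H)] := hmb.sub_right _
    _ = -(a + (m₁ * b₀ + m₀ * b₁) * 2 ^ H) := by ring

/-- Key identity for Montgomery reduction in `1.25 M(n)` (Theorem 3): with `m` odd,
`H = ⌈n/2⌉`, `R = 2 ^ (2 * H)`, `m * m' ≡ -1 (mod R)`, `0 ≤ a < m ^ 2`,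
`b = a * m' mod R`, and splits `m = m₁ * 2^H + m₀`, `b = b₁ * 2^H + b₀` with
`0 ≤ m₀, b₀ < 2^H`, the low sub-product satisfies
`m₀ * b₀ ≡ -(a + (m₁ * b₀ + m₀ * b₁) * 2^H) (mod R)`. -/
theorem montgomery_low_subproduct
    (n : ℕ) (m m' a b m₁ m₀ b₁ b₀ : ℤ)
    (H : ℕ) (hH : H = (n + 1) / 2)
    (hm_odd : Odd m) (hm_pos : 0 < m)
    (hmm' : m * m' ≡ -1 [ZMOD ((2 : ℤ) ^ (2 * H))])
    (ha0 : 0 ≤ a) (ha : a < m ^ 2)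
    (hb : b = a * m' % ((2 : ℤ) ^ (2 * H)))
    (hm_split : m = m₁ * 2 ^ H + m₀) (hm₀0 : 0 ≤ m₀) (hm₀ : m₀ < 2 ^ H)
    (hb_split : b = b₁ * 2 ^ H + b₀) (hb₀0 : 0 ≤ b₀) (hb₀ : b₀ < 2 ^ H) :
    m₀ * b₀ ≡ -(a + (m₁ * b₀ + m₀ * b₁) * 2 ^ H) [ZMOD ((2 : ℤ) ^ (2 * H))] :=
  montgomery_low_subproduct_general m m' a b m₁ m₀ b₁ b₀ H hmm' hb hm_split hb_split
end
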